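/- arXiv:math/0601566 — 10 statements merged into one kernel-verified Lean document; each statement's English description precedes it below -/
import Mathlib

section
/- Every finitely presented module over a commutative ring R has only finitely many minimal primes in its support, provided R has the property that every finitely generated ideal has finitely many minimal primes. -/
/-- A commutative ring is FGFC if every finitely generated ideal has only
finitely many minimal primes. -/
def IsFGFC (R : Type*) [CommRing R] : Prop :=
  ∀ I : Ideal R, I.FG → I.minimalPrimes.Finite

theorem stmt_0 {R : Type*} [CommRing R] (hR : IsFGFC R)
    (M : Type*) [AddCommGroup M] [Module R M] [Module.FinitePresentation R M] :
    {p : PrimeSpectrum R | Minimal (· ∈ Module.support R M) p}.Finite := by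
  classical
  obtain ⟨m, π, hπ⟩ := Module.Finite.exists_fin' R M
  have hK : (LinearMap.ker π).FG := Module.FinitePresentation.fg_ker π hπ
  obtain ⟨k, v, hv⟩ := Submodule.fg_iff_exists_fin_generating_family.mp hK
  -- the 0-th Fitting ideal of the presentation
  set J : Ideal R := Ideal.span (Set.range fun f : Fin m → Fin k =>
    (Matrix.of fun i j => v (f i) j).det) with hJ
  have hJfg : J.FG := Submodule.fg_span (Set.finite_range _)
  -- each generator of `J` annihilates `M` (Cramer's rule)
  have hJann : J ≤ Module.annihilator R M := by
    rw [hJ, Ideal.span_le]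
    rintro _ ⟨f, rfl⟩
    rw [SetLike.mem_coe, Module.mem_annihilator]
    intro x
    obtain ⟨y, rfl⟩ := hπ x
    rw [← map_smul, ← LinearMap.mem_ker]
    have hcr := Matrix.mulVec_cramer (Matrix.of fun i j => v (f i) j).transpose y
    rw [Matrix.det_transpose] at hcr
    rw [← hcr]
    have hmv : (Matrix.of fun i j => v (f i) j).transpose.mulVec
        (Matrix.cramer (Matrix.of fun i j => v (f i) j).transpose y)
        = ∑ i, (Matrix.cramer (Matrix.of fun i j => v (f i) j).transpose y) i • v (f i) := by
      funext j
      simp [Matrix.mulVec, dotProduct, Finset.sum_apply, mul_comm]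
    rw [hmv]
    refine Submodule.sum_mem _ fun i _ => Submodule.smul_mem _ _ ?_
    rw [← hv]
    exact Submodule.subset_span ⟨f i, rfl⟩
  -- conversely, `a ∈ Ann M` implies `a ^ m ∈ J`
  have hannJ : Module.annihilator R M ≤ J.radical := by
    intro a ha
    rw [Module.mem_annihilator] at ha
    have hmem : ∀ i : Fin m, (a • (Pi.single i 1 : Fin m → R)) ∈ LinearMap.ker π := by
      intro i
      rw [LinearMap.mem_ker, map_smul, ha]
    have hcoef : ∀ i : Fin m, ∃ c : Fin k → R,
        (∑ t, c t • v t) = (a • (Pi.single i 1 : Fin m → R)) := by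
      intro i
      have h := hmem i
      rw [← hv] at h
      exact (Submodule.mem_span_range_iff_exists_fun R).mp h
    choose c hc using hcoef
    refine ⟨m, ?_⟩
    -- `a ^ m = det (a • 1)`, expand by multilinearity
    have hW : (a • (1 : Matrix (Fin m) (Fin m) R)).det = a ^ m := by
      rw [Matrix.det_smul, Matrix.det_one, mul_one, Fintype.card_fin]
    have hrows : (fun i => (a • (1 : Matrix (Fin m) (Fin m) R)) i)
        = fun i => ∑ t, c i t • v t := by
      funext i
      rw [hc i]
      funext j
      simp [Matrix.one_apply, Pi.single_apply, eq_comm, mul_comm]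
    have hdet : (a • (1 : Matrix (Fin m) (Fin m) R)).det
        = (Matrix.detRowAlternating (R := R) (n := Fin m)).toMultilinearMap
            (fun i => ∑ t, c i t • v t) := by
      rw [← hrows]
      rfl
    rw [← hW, hdet, MultilinearMap.map_sum]
    refine Ideal.sum_mem _ fun r _ => ?_
    have : (Matrix.detRowAlternating (R := R) (n := Fin m)).toMultilinearMap
        (fun i => c i (r i) • v (r i))
        = (∏ i, c i (r i)) • (Matrix.detRowAlternating (R := R) (n := Fin m)).toMultilinearMap
            (fun i => v (r i)) :=
      MultilinearMap.map_smul_univ _ _ _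
    rw [this, smul_eq_mul]
    refine Ideal.mul_mem_left _ _ ?_
    exact Ideal.subset_span ⟨r, rfl⟩
  -- the support of `M` is the zero locus of `J`
  have hsupp : Module.support R M = PrimeSpectrum.zeroLocus (J : Set R) := by
    rw [Module.support_eq_zeroLocus]
    ext p
    simp only [PrimeSpectrum.mem_zeroLocus, SetLike.coe_subset_coe]
    constructor
    · exact fun h => hJann.trans h
    · exact fun h => hannJ.trans (p.isPrime.radical_le_iff.mpr h)
  have hfin := hR J hJfg
  have hsub : {p : PrimeSpectrum R | Minimal (· ∈ Module.support R M) p}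
      ⊆ PrimeSpectrum.asIdeal ⁻¹' J.minimalPrimes := by
    intro p hp
    rw [Set.mem_setOf_eq, hsupp] at hp
    refine ⟨⟨p.isPrime, (PrimeSpectrum.mem_zeroLocus _ _).mp hp.1⟩, ?_⟩
    rintro q ⟨hq1, hq2⟩ hle
    exact hp.2 ((PrimeSpectrum.mem_zeroLocus _ _).mpr hq2 : (⟨q, hq1⟩ : PrimeSpectrum R) ∈ _)
      (show (⟨q, hq1⟩ : PrimeSpectrum R) ≤ p from hle)
  exact (hfin.preimage (Set.injOn_of_injective fun p q h => PrimeSpectrum.ext h)).subset hsub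
end

section
/- If M is a finitely presented module over a commutative ring R, then the minimal primes of Supp(M) coincide with the minimal primes over the zeroth Fitting ideal F_0(M), i.e., Min(M) = Min(R/F_0(M)). -/
/-- The zeroth Fitting ideal of a module presented by the `m × n` matrix `A`
(rows of `A` generate the relations among `n` generators): the ideal generated
by the `n × n` minors of `A`. -/
def fittingIdealZero {R : Type*} [CommRing R] {m n : ℕ}
    (A : Matrix (Fin m) (Fin n) R) : Ideal R :=
  Ideal.span {d | ∃ r : Fin n → Fin m, d = ((A.submatrix r id).det)}

/-- Cauchy–Binet style expansion: determinant of `C * A` as a combination of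
maximal minors of `A`. -/
lemma det_mul_expand {R : Type*} [CommRing R] {m n : ℕ}
    (C : Matrix (Fin n) (Fin m) R) (A : Matrix (Fin m) (Fin n) R) :
    (C * A).det = ∑ r : Fin n → Fin m, (∏ i, C i (r i)) * (A.submatrix r id).det := by
  have h1 : (C * A) = Matrix.of (fun i => ∑ k, C i k • A k) := by
    ext i j
    simp [Matrix.mul_apply, Finset.sum_apply]
  rw [h1]
  have h2 : (Matrix.of fun i => ∑ k, C i k • A k).det
      = (Matrix.detRowAlternating (R := R) (n := Fin n)).toMultilinearMap (fun i => ∑ k, C i k • A k) := rfl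
  rw [h2, (Matrix.detRowAlternating (R := R) (n := Fin n)).toMultilinearMap.map_sum
    (fun (i : Fin n) (k : Fin m) => C i k • A k)]
  refine Finset.sum_congr rfl fun r _ => ?_
  rw [MultilinearMap.map_smul_univ]
  rfl

lemma fitting_le_ann {R : Type*} [CommRing R] {M : Type*} [AddCommGroup M] [Module R M]
    {m n : ℕ} (A : Matrix (Fin m) (Fin n) R)
    (f : (Fin n → R) →ₗ[R] M) (hf : Function.Surjective f)
    (hker : LinearMap.ker f = Submodule.span R (Set.range fun i => A i)) :
    fittingIdealZero A ≤ Module.annihilator R M := by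
  rw [fittingIdealZero, Ideal.span_le]
  rintro d ⟨r, rfl⟩
  set B := A.submatrix r id with hB
  rw [SetLike.mem_coe, Module.mem_annihilator]
  intro x
  obtain ⟨v, rfl⟩ := hf x
  have hv : B.det • v ∈ LinearMap.ker f := by
    rw [hker]
    have key : B.det • v = Matrix.vecMul (Matrix.vecMul v B.adjugate) B := by
      rw [Matrix.vecMul_vecMul, Matrix.adjugate_mul]
      ext j
      simp [Matrix.vecMul, dotProduct, Matrix.smul_apply, Matrix.one_apply,
        mul_comm, Finset.sum_ite_eq' Finset.univ j (fun i => B.det * v i)]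
    rw [key]
    have : Matrix.vecMul (Matrix.vecMul v B.adjugate) B = ∑ i, (Matrix.vecMul v B.adjugate) i • B i := by
      ext j
      simp [Matrix.vecMul, dotProduct, Finset.sum_apply]
    rw [this]
    refine Submodule.sum_mem _ fun i _ => Submodule.smul_mem _ _ ?_
    have : B i = A (r i) := rfl
    rw [this]
    exact Submodule.subset_span ⟨r i, rfl⟩
  rw [LinearMap.mem_ker] at hv
  rw [← map_smul, hv]

lemma ann_pow_mem {R : Type*} [CommRing R] {M : Type*} [AddCommGroup M] [Module R M]
    {m n : ℕ} (A : Matrix (Fin m) (Fin n) R)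
    (f : (Fin n → R) →ₗ[R] M) (hf : Function.Surjective f)
    (hker : LinearMap.ker f = Submodule.span R (Set.range fun i => A i))
    {a : R} (ha : a ∈ Module.annihilator R M) : a ^ n ∈ fittingIdealZero A := by
  have hrel : ∀ j : Fin n, ∃ c : Fin m → R,
      ∑ i, c i • A i = a • (Pi.single j 1 : Fin n → R) := by
    intro j
    have : (a • (Pi.single j 1 : Fin n → R)) ∈ LinearMap.ker f := by
      rw [LinearMap.mem_ker, map_smul]
      exact Module.mem_annihilator.mp ha _
    rw [hker] at this
    exact (Submodule.mem_span_range_iff_exists_fun R).mp this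
  choose C hC using hrel
  have hCA : (Matrix.of C) * A = a • (1 : Matrix (Fin n) (Fin n) R) := by
    ext j k
    have := congrFun (hC j) k
    simp only [Finset.sum_apply, Pi.smul_apply] at this
    simpa [Matrix.mul_apply, Matrix.one_apply, Pi.single_apply, smul_eq_mul, eq_comm] using this
  have hdet : ((Matrix.of C) * A).det = a ^ n := by
    rw [hCA, Matrix.det_smul, Matrix.det_one, mul_one]
    simp
  rw [← hdet, det_mul_expand]
  refine Ideal.sum_mem _ fun r _ => Ideal.mul_mem_left _ _ ?_
  exact Ideal.subset_span ⟨r, rfl⟩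

theorem stmt_1 {R : Type*} [CommRing R] {M : Type*} [AddCommGroup M] [Module R M]
    {m n : ℕ} (A : Matrix (Fin m) (Fin n) R)
    (f : (Fin n → R) →ₗ[R] M) (hf : Function.Surjective f)
    (hker : LinearMap.ker f = Submodule.span R (Set.range fun i => A i)) :
    {p : PrimeSpectrum R | Minimal (· ∈ Module.support R M) p} =
      {p : PrimeSpectrum R | p.asIdeal ∈ (fittingIdealZero A).minimalPrimes} := by
  have hfin : Module.Finite R M := Module.Finite.of_surjective f hf
  have hsupp : ∀ p : PrimeSpectrum R,
      p ∈ Module.support R M ↔ fittingIdealZero A ≤ p.asIdeal := by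
    intro p
    rw [Module.support_eq_zeroLocus, PrimeSpectrum.mem_zeroLocus]
    constructor
    · intro h
      exact (fitting_le_ann A f hf hker).trans h
    · intro h a ha
      have : a ^ n ∈ p.asIdeal := h (ann_pow_mem A f hf hker ha)
      exact p.isPrime.mem_of_pow_mem _ this
  ext p
  simp only [Set.mem_setOf_eq]
  constructor
  · intro hp
    constructor
    · exact ⟨p.isPrime, (hsupp p).mp hp.1⟩
    · rintro q ⟨hq, hFq⟩ hqp
      have := hp.2 (y := ⟨q, hq⟩) ((hsupp ⟨q, hq⟩).mpr hFq) hqp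
      exact this
  · intro hp
    constructor
    · exact (hsupp p).mpr hp.1.2
    · intro q hq hqp
      exact hp.2 ⟨q.isPrime, (hsupp q).mp hq⟩ hqp
end

section
/- If R is an FGFC ring and I is a finitely generated ideal of R, then R/I is an FGFC ring. -/
theorem stmt_2 {R : Type*} [CommRing R] (hR : IsFGFC R)
    (I : Ideal R) (hI : I.FG) : IsFGFC (R ⧸ I) := by
  intro J hJ
  have hsurj : Function.Surjective (Ideal.Quotient.mk I) := Ideal.Quotient.mk_surjective
  have hcfg : (J.comap (Ideal.Quotient.mk I)).FG := by
    obtain ⟨s, hs⟩ := hJ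
    obtain ⟨t, ht⟩ := hI
    -- J = map mk (span of preimages)
    choose f hf using fun x : R ⧸ I => hsurj x
    have : J.comap (Ideal.Quotient.mk I) = Ideal.span (f '' s) ⊔ I := by
      have hmap : Ideal.map (Ideal.Quotient.mk I) (Ideal.span (f '' s)) = J := by
        rw [Ideal.map_span, Set.image_image]
        simp only [hf]
        rw [show ((fun a => a) '' (s : Set (R ⧸ I))) = s from Set.image_id' _, hs]
      rw [← hmap, Ideal.comap_map_of_surjective _ hsurj, ← RingHom.ker_eq_comap_bot,
        Ideal.mk_ker]
    rw [this]
    exact Submodule.FG.sup (Submodule.fg_span (s.finite_toSet.image f)) ⟨t, ht⟩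
  have hfin := hR _ hcfg
  rw [Ideal.comap_minimalPrimes_eq_of_surjective hsurj] at hfin
  exact hfin.of_finite_image (Set.injOn_of_injective
    (Ideal.comap_injective_of_surjective _ hsurj))
end

section
/- If R is an FGFC ring and S is a multiplicatively closed subset of R, then the localization R_S is an FGFC ring. -/
namespace IsLocalization

variable {R : Type*} [CommSemiring R] {A : Type*} [CommSemiring A] [Algebra R A]

open scoped Pointwise in
theorem exists_fg_map_eq_of_fg (M : Submonoid R) [IsLocalization M A] {I : Ideal A} (hI : I.FG) :
    ∃ J : Ideal R, J.FG ∧ J.map (algebraMap R A) = I := by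
  classical
  obtain ⟨s, rfl⟩ := hI
  refine ⟨Ideal.span (finsetIntegerMultiple M s), ⟨_, rfl⟩, ?_⟩
  set c := commonDenomOfFinset M s
  have hc : c • (s : Set A) = algebraMap R A c • (s : Set A) := by
    ext
    simp only [Set.mem_smul_set, Submonoid.smul_def, Algebra.smul_def, Algebra.algebraMap_self,
      RingHom.id_apply]
  rw [Ideal.map_span, finsetIntegerMultiple_image, hc, Ideal.span,
    Submodule.span_smul_eq_of_isUnit _ _ (map_units A c)]

theorem finite_minimalPrimes_map (M : Submonoid R) [IsLocalization M A] {J : Ideal R}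
    (hJ : J.minimalPrimes.Finite) : (J.map (algebraMap R A)).minimalPrimes.Finite := by
  rw [minimalPrimes_map M]
  exact hJ.preimage (orderEmbedding M A).injective.injOn

theorem isFGFC {R A : Type*} [CommRing R] [CommRing A] [Algebra R A] (M : Submonoid R)
    [IsLocalization M A] (hR : IsFGFC R) : IsFGFC A := by
  intro I hI
  obtain ⟨J, hJ, rfl⟩ := exists_fg_map_eq_of_fg M hI
  exact finite_minimalPrimes_map M (hR J hJ)

end IsLocalization

theorem stmt_3 {R : Type*} [CommRing R] (hR : IsFGFC R)
    (S : Submonoid R) : IsFGFC (Localization S) :=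
  IsLocalization.isFGFC S hR
end

section
/- A commutative ring R is FGFC if and only if the polynomial ring R[x] is FGFC. -/
/-!
For the passage from `R[X]` to `R`: the minimal primes of `I R[X]` are exactly the `p R[X]` with
`p` minimal over `I`.

For the converse, induct on the sum of the degrees of a finite generating set of `J ⊆ R[X]`,
simultaneously for all FGFC rings. Let `g` be a generator of least positive degree, with leading
coefficient `b`. A minimal prime of `J` containing `b` is minimal over `J + (b)`, which is generated
by `g - b X ^ deg g`, `b` and the other generators, with a smaller degree sum. The minimal primes
avoiding `b` come from `R_b[X]`, whose base ring is again FGFC and where `g` generates the same ideal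
as a monic `g₁`; reducing the other generators modulo `g₁` lowers the degree sum, unless they are
all constants. In that case, modulo the ideal `I` of those constants, we are left with a monic `h`
over `R/I`: the ring `(R/I)[X]/(h)` is finite and free over `R/I`, so by going down its minimal
primes lie over the finitely many minimal primes of `R/I`, each with finitely many primes above it.
-/

open Polynomial

section GoingDown

variable {R S : Type*} [CommRing R] [CommRing S] [Algebra R S]

theorem Ideal.under_mem_minimalPrimes_of_hasGoingDown [Algebra.HasGoingDown R S]
    {P : Ideal S} (hP : P ∈ minimalPrimes S) : P.under R ∈ minimalPrimes R := by
  have := hP.1.1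
  refine ⟨⟨Ideal.IsPrime.under R P, bot_le⟩, fun p ⟨hp, _⟩ hle ↦ ?_⟩
  obtain ⟨P', hP'P, hP', hP'p⟩ := P.exists_ideal_le_liesOver_of_le (p := p) (q := P.under R) hle
  rw [hP'p.over]
  exact Ideal.comap_mono (hP.2 ⟨hP', bot_le⟩ hP'P)

theorem finite_minimalPrimes_of_hasGoingDown [Algebra.HasGoingDown R S] [Algebra.QuasiFinite R S]
    (hR : (minimalPrimes R).Finite) : (minimalPrimes S).Finite :=
  (hR.biUnion fun p _ ↦ Algebra.QuasiFinite.finite_primesOver (S := S) p).subset fun _ hP ↦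
    Set.mem_biUnion (Ideal.under_mem_minimalPrimes_of_hasGoingDown hP) ⟨hP.1.1, ⟨rfl⟩⟩

end GoingDown

theorem IsLocalization.exists_fg_map_eq {R S : Type*} [CommRing R] [CommRing S] [Algebra R S]
    (M : Submonoid R) [IsLocalization M S] {J : Ideal S} (hJ : J.FG) :
    ∃ I : Ideal R, I.FG ∧ I.map (algebraMap R S) = J := by
  obtain ⟨s, rfl⟩ := hJ
  choose num hnum using fun x : S ↦ IsLocalization.surj M x
  refine ⟨Ideal.span ((fun x ↦ (num x).1) '' s), Submodule.fg_span (s.finite_toSet.image _), ?_⟩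
  rw [Ideal.map_span, ← Set.image_comp]
  refine le_antisymm (Ideal.span_le.mpr ?_) (Ideal.span_le.mpr fun x hx ↦ ?_)
  · rintro _ ⟨x, hx, rfl⟩
    change algebraMap R S (num x).1 ∈ _
    exact hnum x ▸ Ideal.mul_mem_right _ _ (Ideal.subset_span hx)
  · obtain ⟨u, hu⟩ := IsLocalization.map_units S (num x).2
    have hx' : x = algebraMap R S (num x).1 * ↑u⁻¹ := by
      rw [← hnum x, ← hu, Units.mul_inv_cancel_right]
    exact hx' ▸ Ideal.mul_mem_right _ _ (Ideal.subset_span ⟨x, hx, rfl⟩)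

theorem Ideal.finite_minimalPrimes_of_sup_span_singleton_of_away {R : Type*} [CommRing R]
    (J : Ideal R) (x : R) (S : Type*) [CommRing S] [Algebra R S] [IsLocalization.Away x S]
    (h₁ : (J ⊔ Ideal.span {x}).minimalPrimes.Finite)
    (h₂ : (J.map (algebraMap R S)).minimalPrimes.Finite) : J.minimalPrimes.Finite := by
  refine (h₁.union (h₂.image (Ideal.comap (algebraMap R S)))).subset fun Q hQ ↦ ?_
  have := hQ.1.1
  by_cases hx : x ∈ Q
  · exact .inl ⟨⟨this, sup_le hQ.1.2 ((Ideal.span_singleton_le_iff_mem _).mpr hx)⟩,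
      fun P hP hPQ ↦ hQ.2 ⟨hP.1, le_sup_left.trans hP.2⟩ hPQ⟩
  · have hcomap := IsLocalization.under_map_of_isPrime_disjoint (Submonoid.powers x) S this
      ((Ideal.disjoint_powers_iff_notMem_of_isPrime x).mpr hx)
    refine .inr ⟨Q.map (algebraMap R S), ?_, hcomap⟩
    rw [IsLocalization.minimalPrimes_map (Submonoid.powers x) S, Set.mem_preimage, hcomap]
    exact hQ

theorem Ideal.span_setOf_mem_cons {R : Type*} [CommSemiring R] (a : R) (m : Multiset R) :
    Ideal.span {x | x ∈ a ::ₘ m} = Ideal.span {a} ⊔ Ideal.span {x | x ∈ m} := by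
  rw [← Ideal.span_insert]
  congr 1
  ext
  simp

theorem Ideal.map_span_setOf_mem {R S : Type*} [CommSemiring R] [CommSemiring S] (f : R →+* S)
    (m : Multiset R) : (Ideal.span {x | x ∈ m}).map f = Ideal.span {x | x ∈ m.map f} := by
  rw [Ideal.map_span]
  congr 1
  ext
  simp

namespace Polynomial

variable {R : Type*} [CommRing R]

theorem Monic.finite_minimalPrimes_span_singleton {h : R[X]} (hh : h.Monic)
    (hR : (minimalPrimes R).Finite) : (Ideal.span {h}).minimalPrimes.Finite := by
  have := hh.finite_adjoinRoot
  have := hh.free_adjoinRoot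
  rw [Ideal.minimalPrimes_eq_comap]
  exact (finite_minimalPrimes_of_hasGoingDown (S := AdjoinRoot h) hR).image _

theorem comap_C_map_C (I : Ideal R) : (I.map (C : R →+* R[X])).comap C = I :=
  le_antisymm (fun x hx ↦ by simpa using Ideal.mem_map_C_iff.mp hx 0) Ideal.le_comap_map

theorem minimalPrimes_map_C (I : Ideal R) :
    (I.map (C : R →+* R[X])).minimalPrimes = Ideal.map C '' I.minimalPrimes := by
  ext Q
  constructor
  · intro hQ
    have := hQ.1.1
    have hIq : I ≤ Q.comap C := Ideal.map_le_iff_le_comap.mp hQ.1.2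
    have hQq : Q = (Q.comap C).map C :=
      le_antisymm (hQ.2 ⟨Ideal.isPrime_map_C_of_isPrime, Ideal.map_mono hIq⟩ Ideal.map_comap_le)
        Ideal.map_comap_le
    refine ⟨Q.comap C, ⟨⟨inferInstance, hIq⟩, fun p ⟨hp, hIp⟩ hpq ↦ ?_⟩, hQq.symm⟩
    rw [← comap_C_map_C p]
    refine Ideal.comap_mono (hQ.2 ⟨Ideal.isPrime_map_C_of_isPrime, Ideal.map_mono hIp⟩ ?_)
    exact hQq ▸ Ideal.map_mono hpq
  · rintro ⟨P, hP, rfl⟩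
    have := hP.1.1
    refine ⟨⟨Ideal.isPrime_map_C_of_isPrime, Ideal.map_mono hP.1.2⟩, fun Q ⟨hQ, hIQ⟩ hQP ↦ ?_⟩
    have hPQ : P ≤ Q.comap C := hP.2 ⟨Ideal.IsPrime.comap C,
      Ideal.map_le_iff_le_comap.mp hIQ⟩ (comap_C_map_C P ▸ Ideal.comap_mono hQP)
    exact Ideal.map_le_iff_le_comap.mpr hPQ

theorem exists_fg_span_eq_map_C {m : Multiset R[X]} (hm : ∀ f ∈ m, f.natDegree = 0) :
    ∃ I : Ideal R, I.FG ∧ Ideal.span {f | f ∈ m} = I.map C := by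
  refine ⟨Ideal.span {a | a ∈ m.map (coeff · 0)}, Submodule.fg_span (Multiset.finite_toSet _), ?_⟩
  rw [Ideal.map_span_setOf_mem, Multiset.map_map]
  congr 1
  ext f
  simp only [Set.mem_ofPred_eq, Multiset.mem_map, Function.comp_apply]
  refine ⟨fun hf ↦ ⟨f, hf, (eq_C_of_natDegree_eq_zero (hm f hf)).symm⟩, ?_⟩
  rintro ⟨f, hf, rfl⟩
  rwa [← eq_C_of_natDegree_eq_zero (hm f hf)]

theorem exists_min_natDegree_pos {m : Multiset R[X]} (h : ∃ f ∈ m, f.natDegree ≠ 0) :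
    ∃ g ∈ m, 0 < g.natDegree ∧ ∀ f ∈ m, f.natDegree = 0 ∨ g.natDegree ≤ f.natDegree := by
  classical
  obtain ⟨f, hf, hf0⟩ := h
  obtain ⟨g, hg, hmin⟩ := (m.filter (·.natDegree ≠ 0)).toFinset.exists_min_image natDegree
    ⟨f, by simpa using ⟨hf, hf0⟩⟩
  simp only [Multiset.mem_toFinset, Multiset.mem_filter] at hg hmin
  refine ⟨g, hg.1, Nat.pos_of_ne_zero hg.2, fun f hf ↦ ?_⟩
  by_cases hf0 : f.natDegree = 0
  · exact .inl hf0
  · exact .inr (hmin f ⟨hf, hf0⟩)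

theorem span_cons_sup_span_C_leadingCoeff (g : R[X]) (t : Multiset R[X]) :
    Ideal.span {f | f ∈ g ::ₘ t} ⊔ Ideal.span {C g.leadingCoeff} =
      Ideal.span {f | f ∈ g.eraseLead ::ₘ C g.leadingCoeff ::ₘ t} := by
  have hpair : Ideal.span {g, C g.leadingCoeff} = Ideal.span {g.eraseLead, C g.leadingCoeff} := by
    have := Ideal.span_pair_add_mul_right g.eraseLead (C g.leadingCoeff) (X ^ g.natDegree)
    rwa [mul_comm (X ^ _), g.eraseLead_add_C_mul_X_pow] at this
  simp only [Ideal.span_setOf_mem_cons]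
  rw [sup_right_comm, ← Ideal.span_insert, hpair, Ideal.span_insert, ← sup_assoc]

theorem span_cons_map_modByMonic (g : R[X]) (t : Multiset R[X]) :
    Ideal.span {f | f ∈ g ::ₘ t.map (· %ₘ g)} = Ideal.span {f | f ∈ g ::ₘ t} := by
  have hg' : g ∈ Ideal.span {f | f ∈ g ::ₘ t} := Ideal.subset_span (Multiset.mem_cons_self g t)
  have hg'' : g ∈ Ideal.span {f | f ∈ g ::ₘ t.map (· %ₘ g)} :=
    Ideal.subset_span (Multiset.mem_cons_self _ _)
  refine le_antisymm (Ideal.span_le.mpr fun f hf ↦ ?_) (Ideal.span_le.mpr fun f hf ↦ ?_)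
  · obtain rfl | hf := Multiset.mem_cons.mp hf
    · exact hg'
    obtain ⟨f, hft, rfl⟩ := Multiset.mem_map.mp hf
    rw [modByMonic_eq_sub_mul_div f g]
    exact sub_mem (Ideal.subset_span (Multiset.mem_cons_of_mem hft)) (Ideal.mul_mem_right _ _ hg')
  · obtain rfl | hf := Multiset.mem_cons.mp hf
    · exact hg''
    rw [← modByMonic_add_div f g]
    exact add_mem (Ideal.subset_span (Multiset.mem_cons_of_mem (Multiset.mem_map_of_mem _ hf)))
      (Ideal.mul_mem_right _ _ hg'')

theorem exists_monic_span_singleton_eq {p : R[X]} {e : ℕ} (hp : p.natDegree ≤ e)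
    (he : IsUnit (p.coeff e)) : ∃ q : R[X], q.Monic ∧ q.natDegree ≤ e ∧
      Ideal.span {p} = Ideal.span {q} := by
  refine ⟨C ↑he.unit⁻¹ * p, monic_of_natDegree_le_of_coeff_eq_one e
    ((natDegree_C_mul_le _ _).trans hp) (by simp [coeff_C_mul]),
    (natDegree_C_mul_le _ _).trans hp, ?_⟩
  rw [Ideal.span_singleton_mul_left_unit (isUnit_C.mpr (Units.isUnit _))]

end Polynomial

namespace IsFGFC

section

variable {R : Type*} [CommRing R]

theorem of_isLocalization (hR : IsFGFC R) (M : Submonoid R) (S : Type*) [CommRing S]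
    [Algebra R S] [IsLocalization M S] : IsFGFC S := by
  intro J hJ
  obtain ⟨I, hI, rfl⟩ := IsLocalization.exists_fg_map_eq M hJ
  rw [IsLocalization.minimalPrimes_map M S]
  exact (hR I hI).preimage (IsLocalization.orderEmbedding M S).injective.injOn

theorem finite_minimalPrimes_quotient (hR : IsFGFC R) {I : Ideal R} (hI : I.FG) :
    (minimalPrimes (R ⧸ I)).Finite := by
  have hfin := hR I hI
  rw [Ideal.minimalPrimes_eq_comap] at hfin
  exact hfin.of_finite_image
    (Ideal.comap_injective_of_surjective _ Ideal.Quotient.mk_surjective).injOn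

theorem of_polynomial (hR : IsFGFC R[X]) : IsFGFC R := fun I hI ↦ by
  have hfin := hR _ (hI.map C)
  rw [minimalPrimes_map_C] at hfin
  exact hfin.of_finite_image (Function.LeftInverse.injective comap_C_map_C).injOn

theorem finite_minimalPrimes_map_C (hR : IsFGFC R) {I : Ideal R} (hI : I.FG) :
    (I.map (C : R →+* R[X])).minimalPrimes.Finite := by
  rw [minimalPrimes_map_C]
  exact (hR I hI).image _

theorem finite_minimalPrimes_span_singleton_sup_map_C (hR : IsFGFC R) {h : R[X]} (hh : h.Monic)
    {I : Ideal R} (hI : I.FG) : (Ideal.span {h} ⊔ I.map C).minimalPrimes.Finite := by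
  set π : R[X] →+* (R ⧸ I)[X] := mapRingHom (Ideal.Quotient.mk I)
  have hπ : Function.Surjective π := map_surjective _ Ideal.Quotient.mk_surjective
  have hspan : Ideal.span {h} ⊔ I.map C = (Ideal.span {π h}).comap π := by
    rw [← Set.image_singleton, ← Ideal.map_span, Ideal.comap_map_of_surjective π hπ,
      ← RingHom.ker_eq_comap_bot, ker_mapRingHom, Ideal.mk_ker]
  rw [hspan, Ideal.comap_minimalPrimes_eq_of_surjective hπ]
  exact ((hh.map _).finite_minimalPrimes_span_singleton
    (finite_minimalPrimes_quotient hR hI)).image _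

/- Degrees are counted before the base change `φ`, which may lower them: the minimality of
`deg g` is only known over `R`. -/
theorem finite_minimalPrimes_span_map_cons_of_isUnit {S : Type*} [CommRing S]
    (hS : IsFGFC S) (φ : R →+* S) {g : R[X]} {t : Multiset R[X]} (hg : 0 < g.natDegree)
    (hmin : ∀ f ∈ t, f.natDegree = 0 ∨ g.natDegree ≤ f.natDegree)
    (hunit : IsUnit (φ g.leadingCoeff))
    (ih : ∀ m : Multiset S[X], (m.map natDegree).sum < ((g ::ₘ t).map natDegree).sum →
      (Ideal.span {f | f ∈ m}).minimalPrimes.Finite) :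
    (Ideal.span {f | f ∈ (g ::ₘ t).map (map φ)}).minimalPrimes.Finite := by
  obtain ⟨g₁, hg₁, hg₁g, hspan⟩ :=
    exists_monic_span_singleton_eq (natDegree_map_le (f := φ) (p := g)) (by rwa [coeff_map])
  rw [Multiset.map_cons, Ideal.span_setOf_mem_cons, hspan]
  by_cases hconst : ∀ f ∈ t, f.natDegree = 0
  · obtain ⟨I, hI, hIt⟩ := exists_fg_span_eq_map_C (m := t.map (map φ)) <| by
      simpa using fun f hf ↦ Nat.le_zero.mp (hconst f hf ▸ natDegree_map_le)
    exact hIt ▸ hS.finite_minimalPrimes_span_singleton_sup_map_C hg₁ hI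
  push Not at hconst
  obtain ⟨f', hf't, hf'⟩ := hconst
  have hrem : ∀ f : S[X], (f %ₘ g₁).natDegree < g.natDegree := fun f ↦ by
    by_cases h₁ : g₁ = 1
    · simpa [h₁] using hg
    · exact (natDegree_modByMonic_lt f hg₁ h₁).trans_le hg₁g
  rw [← Ideal.span_setOf_mem_cons, ← span_cons_map_modByMonic]
  refine ih _ ?_
  simp only [Multiset.map_cons, Multiset.sum_cons, Multiset.map_map]
  exact add_lt_add_of_le_of_lt hg₁g <| Multiset.sum_lt_sum
    (fun f _ ↦ natDegree_modByMonic_le_left.trans natDegree_map_le)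
    ⟨f', hf't, (hrem _).trans_le ((hmin f' hf't).resolve_left hf')⟩

end

universe u

theorem finite_minimalPrimes_span_of_forall_lt {R : Type u} [CommRing R] (hR : IsFGFC R)
    (m : Multiset R[X])
    (ih : ∀ (S : Type u) [CommRing S], IsFGFC S → ∀ m' : Multiset S[X],
      (m'.map natDegree).sum < (m.map natDegree).sum →
        (Ideal.span {f | f ∈ m'}).minimalPrimes.Finite) :
    (Ideal.span {f | f ∈ m}).minimalPrimes.Finite := by
  classical
  by_cases hconst : ∀ f ∈ m, f.natDegree = 0
  · obtain ⟨I, hI, hm⟩ := exists_fg_span_eq_map_C hconst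
    exact hm ▸ hR.finite_minimalPrimes_map_C hI
  push Not at hconst
  obtain ⟨g, hgm, hg, hmin⟩ := exists_min_natDegree_pos hconst
  rw [← Multiset.cons_erase hgm] at ih ⊢
  set b := g.leadingCoeff
  let _ : Algebra R[X] (Localization.Away b)[X] := Polynomial.algebra R _
  have : IsLocalization.Away (C b) (Localization.Away b)[X] := by
    simpa [Submonoid.map_powers] using
      Polynomial.isLocalization (Submonoid.powers b) (Localization.Away b)
  refine Ideal.finite_minimalPrimes_of_sup_span_singleton_of_away _ (C b)
    (Localization.Away b)[X] ?_ ?_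
  · rw [span_cons_sup_span_C_leadingCoeff]
    refine ih R hR _ ?_
    have := eraseLead_natDegree_le g
    simp only [Multiset.map_cons, Multiset.sum_cons, natDegree_C]
    omega
  · have hRb := hR.of_isLocalization (Submonoid.powers b) (Localization.Away b)
    rw [Ideal.map_span_setOf_mem]
    exact hRb.finite_minimalPrimes_span_map_cons_of_isUnit (algebraMap R _) hg
      (fun f hf ↦ hmin f (Multiset.mem_of_mem_erase hf))
      (IsLocalization.Away.algebraMap_isUnit b) (ih _ hRb)

theorem finite_minimalPrimes_span {R : Type u} [CommRing R] (hR : IsFGFC R)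
    (m : Multiset R[X]) : (Ideal.span {f | f ∈ m}).minimalPrimes.Finite := by
  induction hn : (m.map natDegree).sum using Nat.strong_induction_on generalizing R with
  | _ n ih =>
    exact hR.finite_minimalPrimes_span_of_forall_lt m fun S _ hS m' hm' ↦ ih _ (hn ▸ hm') hS m' rfl

theorem polynomial {R : Type*} [CommRing R] (hR : IsFGFC R) : IsFGFC R[X] := by
  rintro J ⟨s, rfl⟩
  exact hR.finite_minimalPrimes_span s.val

end IsFGFC

theorem stmt_6 (R : Type*) [CommRing R] :
    IsFGFC R ↔ IsFGFC (Polynomial R) :=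
  ⟨IsFGFC.polynomial, IsFGFC.of_polynomial⟩
end

section
/- Let S be a finitely generated R-algebra, say S ≅ R[x_1,...,x_n]/I, which is finitely presented as an R-module. Then the ideal I is a finitely generated ideal of R[x_1,...,x_n]. -/
theorem stmt_12 {R S : Type*} [CommRing R] [CommRing S] [Algebra R S]
    [Module.FinitePresentation R S] {n : ℕ}
    (φ : MvPolynomial (Fin n) R →ₐ[R] S) (hφ : Function.Surjective φ) :
    (RingHom.ker (φ : MvPolynomial (Fin n) R →+* S)).FG := by
  classical
  -- each generator image is integral over R since S is module-finite
  have hint : ∀ i : Fin n, IsIntegral R (φ (MvPolynomial.X i)) := fun i =>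
    Algebra.IsIntegral.isIntegral _
  choose p hpmonic hpzero using hint
  -- relations in the polynomial ring
  set q : Fin n → MvPolynomial (Fin n) R :=
    fun i => Polynomial.aeval (MvPolynomial.X i) (p i) with hq
  have hφq : ∀ i, φ (q i) = 0 := by
    intro i
    show φ ((Polynomial.aeval (MvPolynomial.X i)) (p i)) = 0
    rw [← Polynomial.aeval_algHom_apply φ (MvPolynomial.X i) (p i), Polynomial.aeval_def]
    exact hpzero i
  set J : Ideal (MvPolynomial (Fin n) R) := Ideal.span (Set.range q) with hJ
  have hJle : J ≤ RingHom.ker (φ : MvPolynomial (Fin n) R →+* S) := by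
    rw [hJ, Ideal.span_le]
    rintro _ ⟨i, rfl⟩
    exact hφq i
  -- the induced map from the quotient
  let ψ : (MvPolynomial (Fin n) R ⧸ J) →ₐ[R] S :=
    Ideal.Quotient.liftₐ J φ (fun a ha => hJle ha)
  have hψ : ∀ x, ψ (Ideal.Quotient.mk J x) = φ x := fun x => rfl
  have hψsurj : Function.Surjective ψ := by
    intro s
    obtain ⟨x, hx⟩ := hφ s
    exact ⟨Ideal.Quotient.mk J x, hx⟩
  -- the quotient is module-finite over R
  have hfin : Module.Finite R (MvPolynomial (Fin n) R ⧸ J) := by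
    have hadj : Algebra.adjoin R
        (Set.range fun i => Ideal.Quotient.mk J (MvPolynomial.X i)) = ⊤ := by
      have : (Set.range fun i => Ideal.Quotient.mk J (MvPolynomial.X i))
          = ⇑(Ideal.Quotient.mkₐ R J) '' Set.range MvPolynomial.X := by
        rw [← Set.range_comp]; rfl
      rw [this, Algebra.adjoin_image, MvPolynomial.adjoin_range_X, Algebra.map_top]
      rw [(AlgHom.range_eq_top _).mpr (Ideal.Quotient.mkₐ_surjective R J)]
    have hfg := fg_adjoin_of_finite (R := R)
      (Set.finite_range fun i => Ideal.Quotient.mk J (MvPolynomial.X i)) ?_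
    · rw [hadj] at hfg
      exact ⟨by rw [← Algebra.top_toSubmodule]; exact hfg⟩
    · rintro _ ⟨i, rfl⟩
      refine ⟨p i, hpmonic i, ?_⟩
      have : (Polynomial.aeval ((Ideal.Quotient.mk J) (MvPolynomial.X i))) (p i)
          = Ideal.Quotient.mk J (q i) := by
        exact Polynomial.aeval_algHom_apply (Ideal.Quotient.mkₐ R J)
          (MvPolynomial.X i) (p i)
      rw [← Polynomial.aeval_def, this, Ideal.Quotient.eq_zero_iff_mem]
      exact Ideal.subset_span ⟨i, rfl⟩
  -- the kernel of ψ is finitely generated as an R-module, hence as an ideal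
  have hker : (RingHom.ker (ψ : (MvPolynomial (Fin n) R ⧸ J) →+* S)).FG := by
    obtain ⟨s, hs⟩ := Module.FinitePresentation.fg_ker ψ.toLinearMap hψsurj
    refine ⟨s, le_antisymm (Ideal.span_le.mpr ?_) ?_⟩
    · intro x hx
      have : x ∈ Submodule.span R (s : Set _) := hs ▸ Submodule.subset_span hx
      rw [hs] at this
      exact this
    · intro x hx
      have hx' : x ∈ Submodule.span R (s : Set _) := by rw [hs]; exact hx
      exact Submodule.span_le_restrictScalars R _ _ hx'
  -- conclude via composition
  have hcomp : (φ : MvPolynomial (Fin n) R →+* S)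
      = (ψ : (MvPolynomial (Fin n) R ⧸ J) →+* S).comp (Ideal.Quotient.mk J) := by
    ext x <;> rfl
  rw [hcomp]
  refine Ideal.fg_ker_comp _ _ ?_ hker Ideal.Quotient.mk_surjective
  rw [Ideal.mk_ker]
  exact ⟨(Set.finite_range q).toFinset, by rw [Set.Finite.coe_toFinset]⟩
end

section
/- If R is an FGFC ring and S is an R-algebra which is finitely presented as an R-module, then S is an FGFC ring. -/
open Function Submodule

namespace Matrix

variable {R α β : Type*}

section Minors

variable [CommRing R]

def minorsIdeal (A : Matrix α β R) (k : ℕ) : Ideal R :=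
  Ideal.span (Set.range fun gh : (Fin k → α) × (Fin k → β) => (A.submatrix gh.1 gh.2).det)

lemma det_submatrix_mem_minorsIdeal (A : Matrix α β R) {k : ℕ} (g : Fin k → α) (h : Fin k → β) :
    (A.submatrix g h).det ∈ A.minorsIdeal k :=
  Ideal.subset_span ⟨(g, h), rfl⟩

lemma minorsIdeal_le_iff {A : Matrix α β R} {k : ℕ} {I : Ideal R} :
    A.minorsIdeal k ≤ I ↔ ∀ (g : Fin k → α) (h : Fin k → β), (A.submatrix g h).det ∈ I := by
  simp [minorsIdeal, Ideal.span_le, Set.range_subset_iff]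

lemma minorsIdeal_fg [Finite α] [Finite β] (A : Matrix α β R) (k : ℕ) : (A.minorsIdeal k).FG :=
  fg_span (Set.finite_range _)

lemma minorsIdeal_zero (A : Matrix α β R) : A.minorsIdeal 0 = ⊤ :=
  (Ideal.eq_top_iff_one _).mpr <| by
    simpa using A.det_submatrix_mem_minorsIdeal finZeroElim finZeroElim

lemma minorsIdeal_eq_bot_of_card_lt [Fintype β] (A : Matrix α β R) {k : ℕ}
    (hk : Fintype.card β < k) : A.minorsIdeal k = ⊥ := by
  refine eq_bot_iff.mpr <| minorsIdeal_le_iff.mpr fun g h => ?_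
  obtain ⟨l, l', hne, heq⟩ := Fintype.exists_ne_map_eq_of_card_lt h (by simpa using hk)
  rw [det_zero_of_column_eq hne fun _ => by simp [heq]]
  exact zero_mem _

lemma exists_minorsIdeal_not_le_of_succ_le [Fintype β] (A : Matrix α β R) {p : Ideal R}
    (hp : p ≠ ⊤) : ∃ r ≤ Fintype.card β, ¬ A.minorsIdeal r ≤ p ∧ A.minorsIdeal (r + 1) ≤ p := by
  classical
  have hex : ∃ k, A.minorsIdeal (k + 1) ≤ p :=
    ⟨Fintype.card β, by simp [A.minorsIdeal_eq_bot_of_card_lt (Nat.lt_succ_self _)]⟩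
  refine ⟨Nat.find hex, Nat.find_min' hex ?_, fun hle => ?_, Nat.find_spec hex⟩
  · simp [A.minorsIdeal_eq_bot_of_card_lt (Nat.lt_succ_self _)]
  rcases hr : Nat.find hex with _ | k
  · rw [hr, minorsIdeal_zero, top_le_iff] at hle
    exact hp hle
  · exact Nat.find_min hex (hr ▸ k.lt_succ_self) (hr ▸ hle)

end Minors

variable {r : ℕ} (A : Matrix α β R) (g : Fin r → α) (h : Fin r → β)

/-- The minor `A[g, h]` bordered by the row `u` on top and the column `i` on the left. -/
def borderedMinor (u : β → R) (i : β) : Matrix (Fin (r + 1)) (Fin (r + 1)) R :=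
  (of (vecCons u fun k => A (g k))).submatrix id (vecCons i h)

lemma borderedMinor_row (j : α) (i : β) :
    A.borderedMinor g h (A j) i = A.submatrix (vecCons j g) (vecCons i h) := by
  ext k l
  cases k using Fin.cases <;> simp [borderedMinor]

variable [CommRing R]

lemma det_borderedMinor_eq_sum_row (u : β → R) (i : β) :
    (A.borderedMinor g h u i).det = ∑ l : Fin (r + 1),
      (-1) ^ (l : ℕ) * (A.submatrix g (vecCons i h ∘ l.succAbove)).det * u (vecCons i h l) := by
  rw [det_succ_row_zero]
  refine Finset.sum_congr rfl fun l _ => ?_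
  rw [mul_right_comm]
  congr 2

lemma det_borderedMinor_eq_sum_col (u : β → R) (i : β) :
    (A.borderedMinor g h u i).det = u i * (A.submatrix g h).det + ∑ k : Fin r,
      (-1) ^ ((k : ℕ) + 1) *
        ((of (vecCons u fun k => A (g k))).submatrix k.succ.succAbove h).det * A (g k) i := by
  rw [det_succ_column_zero, Fin.sum_univ_succ]
  congr 1
  · simp [borderedMinor]
    rfl
  · refine Finset.sum_congr rfl fun k _ => ?_
    simp [borderedMinor, vecCons, Fin.cons_comp_succ]
    ring

def borderedMinorDet (i : β) : (β → R) →ₗ[R] R where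
  toFun u := (A.borderedMinor g h u i).det
  map_add' u v := by
    simp only [det_borderedMinor_eq_sum_row, Pi.add_apply, mul_add, Finset.sum_add_distrib]
  map_smul' c u := by
    simp only [det_borderedMinor_eq_sum_row, Pi.smul_apply, smul_eq_mul, RingHom.id_apply,
      Finset.mul_sum]
    exact Finset.sum_congr rfl fun _ _ => by ring

lemma det_borderedMinor_mem_minorsIdeal {v : β → R} (hv : v ∈ span R (Set.range A)) (i : β) :
    (A.borderedMinor g h v i).det ∈ A.minorsIdeal (r + 1) := by
  have hmap := mem_map_of_mem (f := A.borderedMinorDet g h i) hv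
  rw [map_span] at hmap
  refine span_le.mpr ?_ hmap
  rintro _ ⟨_, ⟨j, rfl⟩, rfl⟩
  simpa [borderedMinorDet, borderedMinor_row] using
    A.det_submatrix_mem_minorsIdeal (vecCons j g) (vecCons i h)

lemma det_submatrix_smul_mem_span_sup_pi {P : Ideal R} [P.IsPrime]
    (hP : A.minorsIdeal (r + 1) ≤ P) {c : R} (hc : c ∉ P) {v : β → R}
    (hv : c • v ∈ span R (Set.range A)) :
    (A.submatrix g h).det • v ∈ span R (Set.range A) ⊔ pi Set.univ fun _ => P := by
  have hbordered (i : β) : (A.borderedMinor g h v i).det ∈ P := by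
    have := hP (A.det_borderedMinor_mem_minorsIdeal g h hv i)
    rw [show (A.borderedMinor g h (c • v) i).det = c * (A.borderedMinor g h v i).det from
      (A.borderedMinorDet g h i).map_smul c v] at this
    exact (Ideal.IsPrime.mem_or_mem ‹_› this).resolve_left hc
  have hcramer : (A.submatrix g h).det • v = (fun i => (A.borderedMinor g h v i).det) -
      ∑ k : Fin r, ((-1) ^ ((k : ℕ) + 1) *
        ((of (vecCons v fun k => A (g k))).submatrix k.succ.succAbove h).det) • A (g k) := by
    ext i
    simp only [det_borderedMinor_eq_sum_col, Pi.smul_apply, Pi.sub_apply, Finset.sum_apply,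
      smul_eq_mul]
    ring
  rw [hcramer, sub_eq_add_neg, add_comm]
  exact add_mem_sup (neg_mem (sum_mem fun k _ => smul_mem _ _ (subset_span ⟨g k, rfl⟩)))
    fun i _ => hbordered i

end Matrix

section

variable {R S : Type*} [CommRing R] [CommRing S] [Algebra R S]

lemma Ideal.exists_mul_pow_mem_of_mem_minimalPrimes {J q : Ideal S} (hq : q ∈ J.minimalPrimes)
    {x : S} (hx : x ∈ q) : ∃ s ∉ q, ∃ k : ℕ, s * x ^ k ∈ J := by
  have := hq.1.1
  by_contra! H
  let W := q.primeCompl ⊔ Submonoid.powers x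
  have hJW : Disjoint (J : Set S) W := Set.disjoint_left.mpr fun y hyJ hyW => by
    obtain ⟨s, hs, _, ⟨k, rfl⟩, rfl⟩ := Submonoid.mem_sup.mp hyW
    exact H s hs k hyJ
  obtain ⟨q', hq', hJq', hq'W⟩ := Ideal.exists_le_prime_disjoint J W hJW
  have hq'q : q' ≤ q := fun y hy => by_contra fun hyq =>
    Set.disjoint_left.mp hq'W hy (Submonoid.mem_sup_left (show y ∈ q.primeCompl from hyq))
  exact Set.disjoint_left.mp hq'W (hq.2 ⟨hq', hJq'⟩ hq'q hx)
    (Submonoid.mem_sup_right (Submonoid.mem_powers x))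

lemma pi_comap_le_comap_restrictScalars {ι : Type*} [Fintype ι] [DecidableEq ι]
    (π : (ι → R) →ₗ[R] S) (q : Ideal S) :
    pi Set.univ (fun _ => q.comap (algebraMap R S)) ≤ (q.restrictScalars R).comap π := by
  intro x hx
  rw [mem_comap, pi_eq_sum_univ x, map_sum]
  exact sum_mem fun i _ => by
    rw [map_smul, Algebra.smul_def]
    exact q.mul_mem_right _ (hx i trivial)

lemma comap_fg_of_surjective {M N : Type*} [AddCommGroup M] [Module R M] [AddCommGroup N]
    [Module R N] {f : M →ₗ[R] N} (hf : Surjective f) (hker : (LinearMap.ker f).FG)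
    {P : Submodule R N} (hP : P.FG) : (P.comap f).FG :=
  fg_of_fg_map_of_fg_inf_ker f (by rwa [map_comap_eq_of_surjective hf])
    (by rwa [inf_eq_right.mpr (LinearMap.ker_le_comap f)])

theorem comap_mem_minimalPrimes_minorsIdeal {ι α : Type*} [Fintype ι] [DecidableEq ι]
    {π : (ι → R) →ₗ[R] S} (hπ : Surjective π) {A : Matrix α ι R} {J : Ideal S}
    (hA : (J.restrictScalars R).comap π = span R (Set.range A)) {q : Ideal S}
    (hq : q ∈ J.minimalPrimes) {r : ℕ} {g : Fin r → α} {h : Fin r → ι}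
    (hδ : (A.submatrix g h).det ∉ q.comap (algebraMap R S))
    (hI : A.minorsIdeal (r + 1) ≤ q.comap (algebraMap R S)) :
    q.comap (algebraMap R S) ∈ (A.minorsIdeal (r + 1)).minimalPrimes := by
  have := hq.1.1
  refine ⟨⟨Ideal.IsPrime.comap _, hI⟩, fun p ⟨hp, hIp⟩ hpq c hc => ?_⟩
  by_contra hcp
  obtain ⟨s, hs, k, hsk⟩ := Ideal.exists_mul_pow_mem_of_mem_minimalPrimes hq hc
  obtain ⟨v, rfl⟩ := hπ s
  have hv : c ^ k • v ∈ span R (Set.range A) := by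
    rw [← hA, mem_comap, map_smul, Algebra.smul_def, map_pow, mul_comm]
    exact hsk
  obtain ⟨w, hw, d, hd, hwd⟩ := mem_sup.mp <|
    A.det_submatrix_smul_mem_span_sup_pi g h hIp (fun hck => hcp (hp.mem_of_pow_mem k hck)) hv
  have hmem : π ((A.submatrix g h).det • v) ∈ q := by
    rw [← hwd, map_add]
    refine add_mem (hq.1.2 (show w ∈ (J.restrictScalars R).comap π from hA ▸ hw)) ?_
    exact pi_comap_le_comap_restrictScalars π q fun i _ => hpq (hd i trivial)
  rw [map_smul, Algebra.smul_def] at hmem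
  exact (Ideal.IsPrime.mem_or_mem ‹_› hmem).elim hδ hs

end

theorem stmt_13 {R S : Type*} [CommRing R] [CommRing S] [Algebra R S]
    [Module.FinitePresentation R S] (hR : IsFGFC R) : IsFGFC S := by
  intro J hJ
  obtain ⟨n, π, hπ⟩ := Module.Finite.exists_fin' R S
  obtain ⟨m, A, hA⟩ := fg_iff_exists_fin_generating_family.mp <|
    comap_fg_of_surjective hπ (Module.FinitePresentation.fg_ker π hπ)
      (Submodule.FG.restrictScalars (R := R) hJ)
  have hcover : J.minimalPrimes ⊆ ⋃ r ∈ Set.Iic n,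
      ⋃ p ∈ ((Matrix.of A).minorsIdeal (r + 1)).minimalPrimes, p.primesOver S := by
    intro q hq
    have hqp := hq.1.1
    have hp : (q.comap (algebraMap R S)).IsPrime := .comap _
    obtain ⟨r, hr, hδ, hI⟩ := (Matrix.of A).exists_minorsIdeal_not_le_of_succ_le hp.ne_top
    simp only [Matrix.minorsIdeal_le_iff, not_forall] at hδ
    obtain ⟨g, h, hδ⟩ := hδ
    simp only [Set.mem_iUnion]
    exact ⟨r, by simpa using hr, _,
      comap_mem_minimalPrimes_minorsIdeal hπ hA.symm hq hδ hI, hqp, ⟨rfl⟩⟩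
  refine ((Set.finite_Iic n).biUnion fun r _ => ?_).subset hcover
  exact (hR _ (Matrix.minorsIdeal_fg _ _)).biUnion fun p _ =>
    Algebra.QuasiFinite.finite_primesOver p
end

section
/- Let R ⊆ S be an integral ring extension. If S is an FGFC ring, then R is an FGFC ring. -/
theorem stmt_14 {R S : Type*} [CommRing R] [CommRing S] [Algebra R S]
    (hinj : Function.Injective (algebraMap R S)) [Algebra.IsIntegral R S]
    (hS : IsFGFC S) : IsFGFC R := by
  intro I hI
  set J := I.map (algebraMap R S) with hJ
  have hJfg : J.FG := Ideal.FG.map hI _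
  have hfin : J.minimalPrimes.Finite := hS J hJfg
  refine Set.Finite.subset (hfin.image (Ideal.comap (algebraMap R S))) ?_
  rintro p hp
  have hpprime : p.IsPrime := hp.1.1
  have hIp : I ≤ p := hp.1.2
  -- lying over: a prime Q of S with comap Q = p
  obtain ⟨Q, -, hQprime, hQcomap⟩ :=
    Ideal.exists_ideal_over_prime_of_isIntegral p (⊥ : Ideal S)
      (by
        rw [← RingHom.ker_eq_comap_bot, (RingHom.injective_iff_ker_eq_bot _).1 hinj]
        exact bot_le)
  have hJQ : J ≤ Q := by
    rw [hJ, Ideal.map_le_iff_le_comap, hQcomap]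
    exact hIp
  obtain ⟨q, hq, hqQ⟩ := Ideal.exists_minimalPrimes_le hJQ
  have hqprime : q.IsPrime := hq.1.1
  have hIq : I ≤ q.comap (algebraMap R S) := by
    refine le_trans ?_ (Ideal.comap_mono hq.1.2)
    exact Ideal.le_comap_map
  have hqp : q.comap (algebraMap R S) ≤ p := hQcomap ▸ Ideal.comap_mono hqQ
  have : p = q.comap (algebraMap R S) :=
    le_antisymm (hp.2 ⟨Ideal.comap_isPrime _ _, hIq⟩ hqp) hqp
  exact ⟨q, hq, this.symm⟩
end

section
/- Let R be a commutative ring in which every finitely generated ideal has finitely many minimal primes, and let P be a prime ideal with height P ≥ h. Then P contains a finitely generated ideal generated by h elements whose height is at least h. -/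
/-- The height of an ideal: the infimum of the heights of primes containing it. -/
noncomputable def idealHeight {R : Type*} [CommRing R] (I : Ideal R) : ℕ∞ :=
  ⨅ p ∈ {p : PrimeSpectrum R | I ≤ p.asIdeal}, Order.height p

private lemma key_aux {R : Type*} [CommRing R] (hR : IsFGFC R) :
    ∀ h : ℕ, ∀ P : PrimeSpectrum R, (h : ℕ∞) ≤ Order.height P →
      ∃ f : Fin h → R, (∀ i, f i ∈ P.asIdeal) ∧
        ∀ r : PrimeSpectrum R, Ideal.span (Set.range f) ≤ r.asIdeal →
          (h : ℕ∞) ≤ Order.height r := by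
  intro h
  induction h with
  | zero =>
    intro P _
    exact ⟨fun i => i.elim0, fun i => i.elim0, fun r _ => by simp⟩
  | succ h ih =>
    intro P hP
    obtain ⟨p, hlast, hlen⟩ := Order.exists_series_of_le_height P
      (n := h + 1) (by exact_mod_cast hP)
    set P' : PrimeSpectrum R := p ⟨h, by omega⟩ with hP'def
    have hP'P : P' < P := by
      have h1 : p ⟨h, by omega⟩ < p (Fin.last p.length) := by
        apply p.strictMono
        simp [Fin.lt_def, hlen]
      rwa [show p (Fin.last p.length) = P from hlast] at h1
    have hP'ht : (h : ℕ∞) ≤ Order.height P' := by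
      have := Order.index_le_height p ⟨h, by omega⟩
      simpa using this
    obtain ⟨f, hfP', hfht⟩ := ih P' hP'ht
    set I : Ideal R := Ideal.span (Set.range f) with hIdef
    have hIfg : I.FG := Submodule.fg_span (Set.finite_range f)
    have hfin : I.minimalPrimes.Finite := hR I hIfg
    have hIP' : I ≤ P'.asIdeal := Ideal.span_le.mpr (Set.range_subset_iff.mpr hfP')
    -- P is not contained in any minimal prime of I
    have hnotle : ∀ q ∈ I.minimalPrimes, ¬ P.asIdeal ≤ q := by
      intro q hq hle
      have hq' : q ≤ P'.asIdeal := hq.2 ⟨P'.isPrime, hIP'⟩ (le_trans (le_of_lt hP'P) hle)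
      exact absurd (le_trans hle hq') (not_le_of_gt hP'P)
    -- prime avoidance
    have havoid : ∃ x ∈ P.asIdeal, ∀ q ∈ I.minimalPrimes, x ∉ q := by
      by_contra hcon
      push_neg at hcon
      have hsub : (P.asIdeal : Set R) ⊆ ⋃ q ∈ (hfin.toFinset : Set (Ideal R)), ((fun q : Ideal R => q) q : Set R) := by
        intro x hx
        obtain ⟨q, hq, hxq⟩ := hcon x hx
        exact Set.mem_biUnion (hfin.mem_toFinset.mpr hq) hxq
      obtain ⟨q, hq, hle⟩ := (Ideal.subset_union_prime (f := fun q : Ideal R => q)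
        (⊥ : Ideal R) (⊥ : Ideal R)
        (fun q hq _ _ => (hfin.mem_toFinset.mp hq).1.1)).mp hsub
      exact hnotle q (hfin.mem_toFinset.mp hq) hle
    obtain ⟨x, hxP, hxq⟩ := havoid
    refine ⟨Fin.cons x f, ?_, ?_⟩
    · intro i
      refine Fin.cases ?_ ?_ i
      · simpa using hxP
      · intro j
        simpa using le_of_lt hP'P (hfP' j)
    · intro r hr
      rw [Fin.range_cons, Ideal.span_insert] at hr
      have hxr : x ∈ r.asIdeal := hr (Ideal.mem_sup_left (Ideal.mem_span_singleton_self x))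
      have hIr : I ≤ r.asIdeal := le_trans le_sup_right hr
      obtain ⟨q, hq, hqr⟩ := Ideal.exists_minimalPrimes_le hIr
      set Q : PrimeSpectrum R := ⟨q, hq.1.1⟩ with hQdef
      have hQr : Q < r := lt_of_le_of_ne hqr (by
        intro hEq
        exact hxq q hq (by rw [show q = r.asIdeal from congrArg PrimeSpectrum.asIdeal hEq]; exact hxr))
      have hQht : (h : ℕ∞) ≤ Order.height Q := hfht Q hq.1.2
      by_cases htop : Order.height Q = ⊤
      · calc ((h + 1 : ℕ) : ℕ∞) ≤ ⊤ := le_top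
          _ = Order.height Q := htop.symm
          _ ≤ Order.height r := Order.height_mono (le_of_lt hQr)
      · have hlt : Order.height Q < Order.height r :=
          Order.height_strictMono hQr (lt_top_iff_ne_top.mpr htop)
        have : (h : ℕ∞) < Order.height r := lt_of_le_of_lt hQht hlt
        have := (ENat.add_one_le_iff (by simp : (h : ℕ∞) ≠ ⊤)).mpr this
        push_cast
        exact this

theorem stmt_17 {R : Type*} [CommRing R] (hR : IsFGFC R)
    (P : PrimeSpectrum R) (h : ℕ) (hht : (h : ℕ∞) ≤ Order.height P) :
    ∃ f : Fin h → R, (∀ i, f i ∈ P.asIdeal) ∧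
      (h : ℕ∞) ≤ idealHeight (Ideal.span (Set.range f)) := by
  obtain ⟨f, hfP, hf⟩ := key_aux hR h P hht
  refine ⟨f, hfP, ?_⟩
  rw [idealHeight]
  exact le_iInf₂ fun r hr => hf r hr
end

section
/- Let R be a commutative ring and J a finitely generated ideal of R. Then every prime of the polynomial ring R[x'] (in any set of variables) minimal over the extended ideal J·R[x'] is of the form p·R[x'] for some prime p of R minimal over J; in particular, if J has finitely many minimal primes in R, then J·R[x'] has finitely many minimal primes in R[x']. -/
open Ideal

private lemma comap_map_C {R : Type*} [CommRing R] {X' : Type*} (p : Ideal R) :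
    (p.map (MvPolynomial.C : R →+* MvPolynomial X' R)).comap
      (MvPolynomial.C : R →+* MvPolynomial X' R) = p := by
  ext x
  simp only [Ideal.mem_comap, MvPolynomial.mem_map_C_iff]
  constructor
  · intro h
    simpa using h 0
  · intro h n
    classical
    rcases eq_or_ne n 0 with rfl | hn
    · simpa using h
    · simp [MvPolynomial.coeff_C, hn, hn.symm]

private lemma isPrime_map_C {R : Type*} [CommRing R] {X' : Type*} {p : Ideal R}
    (hp : p.IsPrime) :
    (p.map (MvPolynomial.C : R →+* MvPolynomial X' R)).IsPrime := by
  rw [← Ideal.Quotient.isDomain_iff_prime]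
  have : IsDomain (MvPolynomial X' (R ⧸ p)) := inferInstance
  exact (MvPolynomial.quotientEquivQuotientMvPolynomial (σ := X') p).toRingEquiv.symm
    |>.toMulEquiv.isDomain _

theorem stmt_19 {R : Type*} [CommRing R] (J : Ideal R) (hJ : J.FG)
    (X' : Type*) :
    (∀ Q ∈ (J.map (MvPolynomial.C : R →+* MvPolynomial X' R)).minimalPrimes,
        ∃ p ∈ J.minimalPrimes, Q = p.map (MvPolynomial.C : R →+* MvPolynomial X' R)) ∧
      (J.minimalPrimes.Finite →
        (J.map (MvPolynomial.C : R →+* MvPolynomial X' R)).minimalPrimes.Finite) := by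
  set C : R →+* MvPolynomial X' R := MvPolynomial.C
  have main : ∀ Q ∈ (J.map C).minimalPrimes, ∃ p ∈ J.minimalPrimes, Q = p.map C := by
    intro Q hQ
    obtain ⟨⟨hQprime, hJQ⟩, hQmin⟩ := hQ
    set p := Q.comap C with hp
    have hpprime : p.IsPrime := hQprime.comap C
    have hJp : J ≤ p := le_trans Ideal.le_comap_map (Ideal.comap_mono hJQ)
    have hmaple : p.map C ≤ Q := Ideal.map_le_iff_le_comap.mpr le_rfl
    have hQeq : Q = p.map C :=
      le_antisymm (hQmin ⟨isPrime_map_C hpprime, Ideal.map_mono hJp⟩ hmaple) hmaple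
    refine ⟨p, ⟨⟨hpprime, hJp⟩, ?_⟩, hQeq⟩
    rintro q ⟨hqprime, hJq⟩ hqp
    have : p.map C ≤ q.map C := by
      rw [← hQeq]
      exact hQmin ⟨isPrime_map_C hqprime, le_trans (Ideal.map_mono hJq) le_rfl⟩
        (le_trans (Ideal.map_mono hqp) hmaple)
    calc p = (p.map C).comap C := (comap_map_C p).symm
    _ ≤ (q.map C).comap C := Ideal.comap_mono this
    _ = q := comap_map_C q
  refine ⟨main, fun hfin => ?_⟩
  have : (J.map C).minimalPrimes ⊆ (fun p => p.map C) '' J.minimalPrimes := by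
    intro Q hQ
    obtain ⟨p, hp, rfl⟩ := main Q hQ
    exact ⟨p, hp, rfl⟩
  exact (hfin.image _).subset this
end
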